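/- Let n be a positive integer, let h_1, …, h_n ≥ 0 and Δ ≥ 0 be real numbers, and let c_1 ≤ c_2 ≤ ⋯ ≤ c_n be real scores. With ρ_i = h_i/(1 + Δ·Σ_{k=1}^n h_k), p_{x↑y} = (1 − e^{−h_y·Δ})·∏_{j=y+1}^n e^{−h_j·Δ} for x < y ≤ n, p_{x→x} = ∏_{j=x+1}^n e^{−h_j·Δ}, and r_k = p_{k→k}·ρ_k + Σ_{x=1}^{k−1} p_{x↑k}·ρ_x, one has Σ_{k=1}^n c_k·r_k ≥ Σ_{k=1}^n c_k·ρ_k; that is, the paper's upper bound on the honest fully-delayed score growth rate is at least its lower bound. -/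

import Mathlib

open Finset

/-!
Read `ρ x` as a mass at level `x` that is redistributed upwards: the fraction `p_{x→x}` stays at
`x` and the fraction `p_{x↑k}` moves to each level `k > x`, so that `r k` is the mass arriving at
`k`. These fractions are nonnegative and sum to `1` (with `P k = ∏_{j>k} e^{-h_j Δ}`, the fraction
`p_{x↑k} = P k - P (k - 1)` telescopes), and moving mass upwards can only increase the total of the
nondecreasing score `c`.
-/

theorem prod_Icc_add_sum_Icc_one_sub_mul_prod {R : Type*} [CommRing R] (E : ℕ → R) (x n : ℕ) :
    ∏ j ∈ Icc (x + 1) n, E j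
      + ∑ k ∈ Icc (x + 1) n, (1 - E k) * ∏ j ∈ Icc (k + 1) n, E j = 1 := by
  simp only [Icc_add_one_left_eq_Ioc]
  induction n with
  | zero => simp
  | succ n ih =>
    rcases le_or_gt x n with hxn | hnx
    · have hsum : ∑ k ∈ Ioc x n, (1 - E k) * ∏ j ∈ Ioc k (n + 1), E j
          = (∑ k ∈ Ioc x n, (1 - E k) * ∏ j ∈ Ioc k n, E j) * E (n + 1) := by
        rw [sum_mul]
        exact sum_congr rfl fun k hk => by rw [prod_Ioc_succ_top (mem_Ioc.1 hk).2, mul_assoc]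
      rw [prod_Ioc_succ_top hxn, sum_Ioc_succ_top hxn, Ioc_self, prod_empty, hsum]
      linear_combination E (n + 1) * ih
    · simp [Ioc_eq_empty_of_le (Nat.succ_le_of_lt hnx)]

theorem sum_Icc_sum_Icc_add_one_comm {M : Type*} [AddCommMonoid M] (f : ℕ → ℕ → M) (n : ℕ) :
    ∑ x ∈ Icc 1 n, ∑ k ∈ Icc (x + 1) n, f x k = ∑ k ∈ Icc 1 n, ∑ x ∈ Icc 1 (k - 1), f x k :=
  sum_comm' fun x k => by simp only [mem_Icc]; omega

theorem sum_mul_le_sum_mul_of_redistribute_up {n : ℕ} {c ρ stay : ℕ → ℝ} {up : ℕ → ℕ → ℝ}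
    (hc : MonotoneOn c (Icc 1 n)) (hρ : ∀ x ∈ Icc 1 n, 0 ≤ ρ x)
    (hup : ∀ x ∈ Icc 1 n, ∀ k ∈ Icc (x + 1) n, 0 ≤ up x k)
    (hmass : ∀ x ∈ Icc 1 n, stay x + ∑ k ∈ Icc (x + 1) n, up x k = 1) :
    ∑ x ∈ Icc 1 n, c x * ρ x
      ≤ ∑ k ∈ Icc 1 n, c k * (stay k * ρ k + ∑ x ∈ Icc 1 (k - 1), up x k * ρ x) :=
  calc ∑ x ∈ Icc 1 n, c x * ρ x
      = ∑ x ∈ Icc 1 n, (c x * (stay x * ρ x) + ∑ k ∈ Icc (x + 1) n, c x * (up x k * ρ x)) :=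
        sum_congr rfl fun x hx => by
          simp only [← mul_sum, ← sum_mul, ← mul_add, ← add_mul, hmass x hx, one_mul]
    _ ≤ ∑ x ∈ Icc 1 n, (c x * (stay x * ρ x) + ∑ k ∈ Icc (x + 1) n, c k * (up x k * ρ x)) := by
        gcongr with x hx k hk
        · exact mul_nonneg (hup x hx k hk) (hρ x hx)
        · have hk' := mem_Icc.1 hk
          exact hc hx (mem_Icc.2 ⟨by omega, hk'.2⟩) (by omega)
    _ = ∑ k ∈ Icc 1 n, c k * (stay k * ρ k + ∑ x ∈ Icc 1 (k - 1), up x k * ρ x) := by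
        rw [sum_add_distrib, sum_Icc_sum_Icc_add_one_comm, ← sum_add_distrib]
        simp only [mul_add, mul_sum]

theorem stmt_7_general (n : ℕ) (h : ℕ → ℝ)
    (hh : ∀ i ∈ Finset.Icc 1 n, 0 ≤ h i) (Δ : ℝ) (hΔ : 0 ≤ Δ)
    (c : ℕ → ℝ)
    (hc : ∀ i ∈ Finset.Icc 1 n, ∀ j ∈ Finset.Icc 1 n, i ≤ j → c i ≤ c j)
    (ρ : ℕ → ℝ) (hρ : ∀ i, ρ i = h i / (1 + Δ * ∑ k ∈ Finset.Icc 1 n, h k))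
    (r : ℕ → ℝ)
    (hr : ∀ k, r k
      = (∏ j ∈ Finset.Icc (k + 1) n, Real.exp (-(h j * Δ))) * ρ k
        + ∑ x ∈ Finset.Icc 1 (k - 1),
            ((1 - Real.exp (-(h k * Δ)))
              * ∏ j ∈ Finset.Icc (k + 1) n, Real.exp (-(h j * Δ))) * ρ x) :
    ∑ k ∈ Finset.Icc 1 n, c k * ρ k ≤ ∑ k ∈ Finset.Icc 1 n, c k * r k := by
  have hρ_nonneg : ∀ i ∈ Icc 1 n, 0 ≤ ρ i := fun i hi => by
    have := sum_nonneg hh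
    have := hh i hi
    rw [hρ]
    positivity
  have hexp_le_one : ∀ k ∈ Icc 1 n, Real.exp (-(h k * Δ)) ≤ 1 := fun k hk =>
    Real.exp_le_one_iff.2 (neg_nonpos.2 (mul_nonneg (hh k hk) hΔ))
  simp only [hr]
  refine sum_mul_le_sum_mul_of_redistribute_up hc hρ_nonneg (fun x _ k hk => ?_)
    fun x _ => prod_Icc_add_sum_Icc_one_sub_mul_prod _ x n
  have hk : k ∈ Icc 1 n := by
    have := mem_Icc.1 hk
    exact mem_Icc.2 ⟨by omega, this.2⟩
  exact mul_nonneg (sub_nonneg.2 (hexp_le_one k hk)) (prod_nonneg fun j _ => (Real.exp_pos _).le)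

/-- With scores `c 1 ≤ c 2 ≤ ⋯ ≤ c n`,
`ρ i = h i / (1 + Δ·Σ_{k=1}^n h k)`,
`p_{x↑y} = (1 − e^{−h y·Δ})·∏_{j=y+1}^n e^{−h j·Δ}` for `x < y ≤ n`,
`p_{x→x} = ∏_{j=x+1}^n e^{−h j·Δ}`, and
`r k = p_{k→k}·ρ k + Σ_{x=1}^{k−1} p_{x↑k}·ρ x`, one has
`Σ_{k=1}^n c k · r k ≥ Σ_{k=1}^n c k · ρ k`: the paper's upper bound on the
honest fully-delayed score growth rate is at least its lower bound. -/
theorem stmt_7 (n : ℕ) (hn : 0 < n) (h : ℕ → ℝ)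
    (hh : ∀ i ∈ Finset.Icc 1 n, 0 ≤ h i) (Δ : ℝ) (hΔ : 0 ≤ Δ)
    (c : ℕ → ℝ)
    (hc : ∀ i ∈ Finset.Icc 1 n, ∀ j ∈ Finset.Icc 1 n, i ≤ j → c i ≤ c j)
    (ρ : ℕ → ℝ) (hρ : ∀ i, ρ i = h i / (1 + Δ * ∑ k ∈ Finset.Icc 1 n, h k))
    (r : ℕ → ℝ)
    (hr : ∀ k, r k
      = (∏ j ∈ Finset.Icc (k + 1) n, Real.exp (-(h j * Δ))) * ρ k
        + ∑ x ∈ Finset.Icc 1 (k - 1),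
            ((1 - Real.exp (-(h k * Δ)))
              * ∏ j ∈ Finset.Icc (k + 1) n, Real.exp (-(h j * Δ))) * ρ x) :
    ∑ k ∈ Finset.Icc 1 n, c k * ρ k ≤ ∑ k ∈ Finset.Icc 1 n, c k * r k :=
  stmt_7_general n h hh Δ hΔ c hc ρ hρ r hr
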